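/- Theorem 3, exact expert update of A2D (finite belief-MDP form): let d be a pmf on B with d(b) > 0 for every b ∈ B, and let K be a set of policies containing at least one optimal policy. If κ* ∈ K satisfies ∑_b d(b)·∑_a κ*(a|b)·Q^{κ*}(a,b) ≥ ∑_b d(b)·∑_a κ(a|b)·Q^{κ}(a,b) for every κ ∈ K (i.e. κ* maximizes the expected Q-value objective over K), then κ* is optimal: V^{κ*}(b) = V*(b) for all b ∈ B. -/

import Mathlib

/-! Under a policy `κ` the beliefs form a Markov chain with row-stochastic transition
matrix `P_κ(b, b') = ∑ₐ κ(a|b) p(b'|b,a)`, and `V^κ` is the discounted return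
`∑ₜ γᵗ P_κᵗ R_κ` of the expected one-step reward `R_κ`. Splitting off the first step gives
the Bellman equation `V^κ(b) = ∑ₐ κ(a|b) Q^κ(a,b)`, so the objective maximized by `κ*` is
`∑_b d(b) V^κ(b)`. Comparing `κ*` with an optimal policy in `K` gives
`∑_b d(b) V*(b) ≤ ∑_b d(b) V^{κ*}(b)`, while `V^{κ*} ≤ V*` pointwise; since every `d(b)` is
positive, the two agree everywhere. -/

open scoped BigOperators Classical

noncomputable section

/-- A probability mass function on a finite type. -/
def IsPmf {X : Type*} [Fintype X] (p : X → ℝ) : Prop :=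
  (∀ x, 0 ≤ p x) ∧ ∑ x, p x = 1

/-- Time-`t` distribution of the chain on belief states started at `b₀`, following
policy `κ` with transition kernel `p`. -/
def chain {B A : Type*} [Fintype B] [Fintype A]
    (p : B → A → B → ℝ) (κ : B → A → ℝ) (b₀ : B) : ℕ → B → ℝ
  | 0 => fun b => if b = b₀ then 1 else 0
  | t + 1 => fun b'' => ∑ b' : B, ∑ a : A, chain p κ b₀ t b' * κ b' a * p b' a b''

/-- Value function `V^κ(b₀) = ∑_t γ^t·E[r(b_t,a_t,b_{t+1})]` of the chain started
at `b₀`. -/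
def Vval {B A : Type*} [Fintype B] [Fintype A]
    (γ : ℝ) (p : B → A → B → ℝ) (r : B → A → B → ℝ)
    (κ : B → A → ℝ) (b₀ : B) : ℝ :=
  ∑' t : ℕ, γ ^ t * ∑ b : B, ∑ a : A, ∑ b' : B,
    chain p κ b₀ t b * κ b a * p b a b' * r b a b'

/-- Q-function `Q^κ(a,b) = ∑_{b'} p(b'|b,a)·(r(b,a,b') + γ·V^κ(b'))`. -/
def Qval {B A : Type*} [Fintype B] [Fintype A]
    (γ : ℝ) (p : B → A → B → ℝ) (r : B → A → B → ℝ)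
    (κ : B → A → ℝ) (a : A) (b : B) : ℝ :=
  ∑ b' : B, p b a b' * (r b a b' + γ * Vval γ p r κ b')

/-- Optimal value function `V*(b) = ⨆_κ V^κ(b)` over all policies. -/
def Vstar {B A : Type*} [Fintype B] [Fintype A]
    (γ : ℝ) (p : B → A → B → ℝ) (r : B → A → B → ℝ) (b : B) : ℝ :=
  ⨆ κ : {κ : B → A → ℝ // ∀ b', IsPmf (κ b')}, Vval γ p r κ.1 b

open Finset Matrix

lemma IsPmf.sum_mul_le {X : Type*} [Fintype X] {w f : X → ℝ} {c : ℝ} (hw : IsPmf w)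
    (hf : ∀ x, f x ≤ c) : ∑ x, w x * f x ≤ c :=
  calc ∑ x, w x * f x ≤ ∑ x, w x * c :=
        sum_le_sum fun x _ => mul_le_mul_of_nonneg_left (hf x) (hw.1 x)
    _ = c := by rw [← sum_mul, hw.2, one_mul]

lemma eq_of_sum_mul_le_of_pos {X : Type*} [Fintype X] {w f g : X → ℝ} (hw : ∀ x, 0 < w x)
    (hfg : ∀ x, f x ≤ g x) (hsum : ∑ x, w x * g x ≤ ∑ x, w x * f x) (x : X) :
    f x = g x := by
  have hle : ∀ x ∈ univ, w x * f x ≤ w x * g x := fun x _ =>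
    mul_le_mul_of_nonneg_left (hfg x) (hw x).le
  have heq := (sum_eq_sum_iff_of_le hle).1 (le_antisymm (sum_le_sum hle) hsum) x (mem_univ x)
  exact mul_left_cancel₀ (hw x).ne' heq

lemma summable_geometric_mul_of_abs_le {γ c : ℝ} (hγ0 : 0 ≤ γ) (hγ1 : γ < 1) {f : ℕ → ℝ}
    (hf : ∀ t, |f t| ≤ c) : Summable fun t => γ ^ t * f t := by
  refine Summable.of_norm_bounded ((summable_geometric_of_lt_one hγ0 hγ1).mul_right c)
    fun t => ?_
  rw [Real.norm_eq_abs, abs_mul, abs_of_nonneg (pow_nonneg hγ0 t)]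
  exact mul_le_mul_of_nonneg_left (hf t) (pow_nonneg hγ0 t)

section RowStochastic

variable {n : Type*} [Fintype n] [DecidableEq n] {M : Matrix n n ℝ} {γ : ℝ}

lemma mulVec_le_of_mem_rowStochastic (hM : M ∈ rowStochastic ℝ n) {v : n → ℝ} {c : ℝ}
    (hv : ∀ j, v j ≤ c) (i : n) : (M *ᵥ v) i ≤ c :=
  IsPmf.sum_mul_le
    ⟨fun _ => nonneg_of_mem_rowStochastic hM, sum_row_of_mem_rowStochastic hM i⟩ hv

lemma abs_mulVec_le_of_mem_rowStochastic (hM : M ∈ rowStochastic ℝ n) {v : n → ℝ} {c : ℝ}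
    (hv : ∀ j, |v j| ≤ c) (i : n) : |(M *ᵥ v) i| ≤ c := by
  obtain ⟨hv_le, hv_ge⟩ := forall_and.1 fun j => abs_le'.1 (hv j)
  refine abs_le'.2 ⟨mulVec_le_of_mem_rowStochastic hM hv_le i, ?_⟩
  rw [← Pi.neg_apply, ← mulVec_neg]
  exact mulVec_le_of_mem_rowStochastic hM hv_ge i

def discountedReturn (γ : ℝ) (M : Matrix n n ℝ) (v : n → ℝ) (i : n) : ℝ :=
  ∑' t : ℕ, γ ^ t * (M ^ t *ᵥ v) i

lemma summable_discountedReturn (hM : M ∈ rowStochastic ℝ n) (hγ0 : 0 ≤ γ) (hγ1 : γ < 1)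
    (v : n → ℝ) (i : n) : Summable fun t : ℕ => γ ^ t * (M ^ t *ᵥ v) i :=
  summable_geometric_mul_of_abs_le hγ0 hγ1 fun t => abs_mulVec_le_of_mem_rowStochastic
    (pow_mem hM t) (fun j => single_le_sum (f := fun j => |v j|) (fun _ _ => abs_nonneg _)
      (mem_univ j)) i

lemma discountedReturn_le (hM : M ∈ rowStochastic ℝ n) (hγ0 : 0 ≤ γ) (hγ1 : γ < 1)
    {v : n → ℝ} {c : ℝ} (hv : ∀ j, v j ≤ c) (i : n) :
    discountedReturn γ M v i ≤ (1 - γ)⁻¹ * c := by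
  calc discountedReturn γ M v i ≤ ∑' t : ℕ, γ ^ t * c :=
        (summable_discountedReturn hM hγ0 hγ1 v i).tsum_le_tsum
          (fun t => mul_le_mul_of_nonneg_left
            (mulVec_le_of_mem_rowStochastic (pow_mem hM t) hv i) (pow_nonneg hγ0 t))
          ((summable_geometric_of_lt_one hγ0 hγ1).mul_right c)
    _ = (1 - γ)⁻¹ * c := by rw [tsum_mul_right, tsum_geometric_of_lt_one hγ0 hγ1]

lemma discountedReturn_eq_add_mulVec (hM : M ∈ rowStochastic ℝ n) (hγ0 : 0 ≤ γ)
    (hγ1 : γ < 1) (v : n → ℝ) (i : n) :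
    discountedReturn γ M v i = v i + γ * (M *ᵥ discountedReturn γ M v) i := by
  have hshift : ∀ t : ℕ, γ ^ (t + 1) * (M ^ (t + 1) *ᵥ v) i
      = γ * ∑ j, M i j * (γ ^ t * (M ^ t *ᵥ v) j) := by
    intro t
    rw [pow_succ' γ, pow_succ' M, ← mulVec_mulVec]
    simp only [mulVec, dotProduct, mul_sum]
    exact sum_congr rfl fun j _ => sum_congr rfl fun k _ => by ring
  rw [discountedReturn, (summable_discountedReturn hM hγ0 hγ1 v i).tsum_eq_zero_add,
    tsum_congr hshift, tsum_mul_left, Summable.tsum_finsetSum fun j _ =>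
      (summable_discountedReturn hM hγ0 hγ1 v j).mul_left _]
  simp only [pow_zero, one_mulVec, one_mul, tsum_mul_left]
  rfl

end RowStochastic

section BeliefMDP

variable {B A : Type*} [Fintype B] [Fintype A]

def transitionMatrix (p : B → A → B → ℝ) (κ : B → A → ℝ) : Matrix B B ℝ :=
  of fun b b' => ∑ a, κ b a * p b a b'

def expectedReward (p r : B → A → B → ℝ) (κ : B → A → ℝ) (b : B) : ℝ :=
  ∑ a, κ b a * ∑ b', p b a b' * r b a b'

variable {p : B → A → B → ℝ} {κ : B → A → ℝ}

lemma transitionMatrix_mem_rowStochastic (hp : ∀ b a, IsPmf (p b a))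
    (hκ : ∀ b, IsPmf (κ b)) : transitionMatrix p κ ∈ rowStochastic ℝ B := by
  refine mem_rowStochastic_iff_sum.2 ⟨fun b b' => sum_nonneg fun a _ =>
    mul_nonneg ((hκ b).1 a) ((hp b a).1 b'), fun b => ?_⟩
  simp only [transitionMatrix, of_apply]
  rw [sum_comm]
  simp only [← mul_sum, (hp b _).2, mul_one, (hκ b).2]

lemma chain_eq_pow_apply (b₀ : B) (t : ℕ) (b : B) :
    chain p κ b₀ t b = (transitionMatrix p κ ^ t) b₀ b := by
  induction t generalizing b with
  | zero => simp [chain, one_apply, eq_comm]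
  | succ t ih =>
    simp only [chain, ih, pow_succ, mul_apply]
    simp only [transitionMatrix, of_apply, mul_sum, mul_assoc]

lemma Vval_eq_discountedReturn (γ : ℝ) (r : B → A → B → ℝ) (b₀ : B) :
    Vval γ p r κ b₀
      = discountedReturn γ (transitionMatrix p κ) (expectedReward p r κ) b₀ := by
  refine tsum_congr fun t => congrArg _ (sum_congr rfl fun b _ => ?_)
  simp only [expectedReward, chain_eq_pow_apply, mul_sum, mul_assoc]

lemma Vval_eq_sum_mul_Qval (hp : ∀ b a, IsPmf (p b a)) (hκ : ∀ b, IsPmf (κ b)) {γ : ℝ}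
    (hγ0 : 0 ≤ γ) (hγ1 : γ < 1) (r : B → A → B → ℝ) (b : B) :
    Vval γ p r κ b = ∑ a, κ b a * Qval γ p r κ a b := by
  have hV := funext (Vval_eq_discountedReturn (p := p) (κ := κ) γ r)
  rw [hV, discountedReturn_eq_add_mulVec (transitionMatrix_mem_rowStochastic hp hκ) hγ0 hγ1,
    ← hV]
  simp only [Qval, expectedReward, mulVec, dotProduct, transitionMatrix, of_apply, mul_add,
    sum_add_distrib, mul_sum, sum_mul]
  congr 1
  rw [sum_comm]
  exact sum_congr rfl fun a _ => sum_congr rfl fun b' _ => by ring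

lemma Vval_le_Vstar (hp : ∀ b a, IsPmf (p b a)) (hκ : ∀ b, IsPmf (κ b)) {γ : ℝ}
    (hγ0 : 0 ≤ γ) (hγ1 : γ < 1) (r : B → A → B → ℝ) (b : B) :
    Vval γ p r κ b ≤ Vstar γ p r b := by
  obtain ⟨c, hc⟩ := Finite.bddAbove_range fun x : B × A × B => r x.1 x.2.1 x.2.2
  have hr : ∀ b a b', r b a b' ≤ c := fun b a b' => hc ⟨(b, a, b'), rfl⟩
  refine le_ciSup
    (f := fun κ : {κ : B → A → ℝ // ∀ b', IsPmf (κ b')} => Vval γ p r κ.1 b)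
    ⟨(1 - γ)⁻¹ * c, ?_⟩ ⟨κ, hκ⟩
  rintro _ ⟨⟨κ', hκ'⟩, rfl⟩
  show Vval γ p r κ' b ≤ _
  rw [Vval_eq_discountedReturn]
  exact discountedReturn_le (transitionMatrix_mem_rowStochastic hp hκ') hγ0 hγ1
    (fun b => (hκ' b).sum_mul_le fun a => (hp b a).sum_mul_le (hr b a)) b

end BeliefMDP

theorem a2d_exact_expert_update_general
    {B A : Type*} [Fintype B] [Fintype A]
    (p : B → A → B → ℝ) (hp : ∀ b a, IsPmf (p b a))
    (r : B → A → B → ℝ)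
    (γ : ℝ) (hγ0 : 0 ≤ γ) (hγ1 : γ < 1)
    (d : B → ℝ) (hdpos : ∀ b, 0 < d b)
    (K : Set (B → A → ℝ)) (hK : ∀ κ ∈ K, ∀ b, IsPmf (κ b))
    (hKopt : ∃ κ ∈ K, ∀ b, Vval γ p r κ b = Vstar γ p r b)
    (κstar : B → A → ℝ) (hκstar : κstar ∈ K)
    (hmax : ∀ κ ∈ K,
      ∑ b, d b * ∑ a, κ b a * Qval γ p r κ a b
        ≤ ∑ b, d b * ∑ a, κstar b a * Qval γ p r κstar a b) :
    ∀ b, Vval γ p r κstar b = Vstar γ p r b := by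
  obtain ⟨κopt, hκoptK, hκopt⟩ := hKopt
  have hobjective : ∀ κ ∈ K, ∑ b, d b * ∑ a, κ b a * Qval γ p r κ a b
      = ∑ b, d b * Vval γ p r κ b := fun κ hκ => sum_congr rfl fun b _ => by
    rw [Vval_eq_sum_mul_Qval hp (hK κ hκ) hγ0 hγ1]
  have hsum := hmax κopt hκoptK
  rw [hobjective κopt hκoptK, hobjective κstar hκstar] at hsum
  simp only [hκopt] at hsum
  exact eq_of_sum_mul_le_of_pos hdpos (Vval_le_Vstar hp (hK κstar hκstar) hγ0 hγ1 r) hsum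

/-- Theorem 3 (exact expert update of A2D, finite belief-MDP form): if `d` is strictly
positive and `κ*` maximizes the expected Q-value objective over a set `K` of policies
containing at least one optimal policy, then `κ*` is optimal. -/
theorem a2d_exact_expert_update
    {B A : Type*} [Fintype B] [Fintype A] [Nonempty B] [Nonempty A]
    (p : B → A → B → ℝ) (hp : ∀ b a, IsPmf (p b a))
    (r : B → A → B → ℝ)
    (γ : ℝ) (hγ0 : 0 ≤ γ) (hγ1 : γ < 1)
    (d : B → ℝ) (hd : IsPmf d) (hdpos : ∀ b, 0 < d b)
    (K : Set (B → A → ℝ)) (hK : ∀ κ ∈ K, ∀ b, IsPmf (κ b))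
    (hKopt : ∃ κ ∈ K, ∀ b, Vval γ p r κ b = Vstar γ p r b)
    (κstar : B → A → ℝ) (hκstar : κstar ∈ K)
    (hmax : ∀ κ ∈ K,
      ∑ b, d b * ∑ a, κ b a * Qval γ p r κ a b
        ≤ ∑ b, d b * ∑ a, κstar b a * Qval γ p r κstar a b) :
    ∀ b, Vval γ p r κstar b = Vstar γ p r b :=
  a2d_exact_expert_update_general p hp r γ hγ0 hγ1 d hdpos K hK hKopt κstar hκstar hmax
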